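/- arXiv:2106.06676 — 2 statements merged into one kernel-verified Lean document; each statement's English description precedes it below -/
import Mathlib

section
/- Let B be positive definite, M positive semidefinite, w ∈ ℝ^d with wwᵀ ⪯ γ·B for some 0 < γ < 1. Then Tr(M(B − wwᵀ)⁻¹) ≤ Tr(MB⁻¹) + Tr(MB⁻¹wwᵀB⁻¹)/(1 − γ). -/
open Matrix

section aux
variable {d : ℕ}

lemma vecMulVec_mulVec' (v u x : Fin d → ℝ) :
    Matrix.vecMulVec v u *ᵥ x = (u ⬝ᵥ x) • v := by
  ext i
  simp only [Matrix.mulVec, dotProduct, vecMulVec_apply, Pi.smul_apply, smul_eq_mul,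
    Finset.sum_mul]
  exact Finset.sum_congr rfl fun _ _ => by ring

lemma trace_mul_vecMulVec (A : Matrix (Fin d) (Fin d) ℝ) (v u : Fin d → ℝ) :
    Matrix.trace (A * Matrix.vecMulVec v u) = u ⬝ᵥ A *ᵥ v := by
  simp only [Matrix.trace, Matrix.diag, Matrix.mul_apply, vecMulVec_apply, dotProduct,
    Matrix.mulVec, Finset.mul_sum]
  exact Finset.sum_congr rfl fun _ _ => Finset.sum_congr rfl fun _ _ => by ring

lemma vecMulVec_mul_mul_vecMulVec (A : Matrix (Fin d) (Fin d) ℝ) (v : Fin d → ℝ) :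
    Matrix.vecMulVec v v * A * Matrix.vecMulVec v v
      = (v ⬝ᵥ A *ᵥ v) • Matrix.vecMulVec v v := by
  ext i j
  simp only [Matrix.mul_apply, vecMulVec_apply, Matrix.smul_apply, dotProduct, Matrix.mulVec,
    smul_eq_mul, Finset.mul_sum, Finset.sum_mul]
  rw [Finset.sum_comm]
  exact Finset.sum_congr rfl fun _ _ => Finset.sum_congr rfl fun _ _ => by ring
end aux

theorem stmt_8 {d : ℕ} (B M : Matrix (Fin d) (Fin d) ℝ) (hB : B.PosDef)
    (hM : M.PosSemidef) (w : Fin d → ℝ) (γ : ℝ) (hγ0 : 0 < γ) (hγ1 : γ < 1)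
    (hw : (γ • B - Matrix.vecMulVec w w).PosSemidef) :
    Matrix.trace (M * (B - Matrix.vecMulVec w w)⁻¹) ≤
      Matrix.trace (M * B⁻¹) +
        Matrix.trace (M * B⁻¹ * Matrix.vecMulVec w w * B⁻¹) / (1 - γ) := by
  have hBinv : (B⁻¹).PosDef := hB.inv
  have hBsymm : B⁻¹ᵀ = B⁻¹ := by
    have := hBinv.1
    simpa [Matrix.IsHermitian] using this
  set W : Matrix (Fin d) (Fin d) ℝ := Matrix.vecMulVec w w with hW
  set c : ℝ := w ⬝ᵥ B⁻¹ *ᵥ w with hc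
  have hc0 : 0 ≤ c := by simpa using hBinv.posSemidef.dotProduct_mulVec_nonneg w
  have hBB : B * B⁻¹ = 1 := Matrix.mul_nonsing_inv B (isUnit_iff_ne_zero.mpr hB.det_pos.ne')
  -- c ≤ γ
  have hkey : 0 ≤ γ * c - c * c := by
    have h := hw.dotProduct_mulVec_nonneg (B⁻¹ *ᵥ w)
    have h1 : (B⁻¹ *ᵥ w) ⬝ᵥ B *ᵥ (B⁻¹ *ᵥ w) = c := by
      rw [Matrix.mulVec_mulVec, hBB, Matrix.one_mulVec, dotProduct_comm]
    have h3 : (B⁻¹ *ᵥ w) ⬝ᵥ W *ᵥ (B⁻¹ *ᵥ w) = c * c := by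
      rw [hW, vecMulVec_mulVec', dotProduct_smul, smul_eq_mul, hc,
        dotProduct_comm (B⁻¹ *ᵥ w) w]
    simp only [Matrix.sub_mulVec, Matrix.smul_mulVec, dotProduct_sub,
      dotProduct_smul, star_trivial, smul_eq_mul, h1, h3] at h
    linarith
  have hcγ : c ≤ γ := by nlinarith
  have hc1 : (0:ℝ) < 1 - c := by linarith
  -- Sherman--Morrison
  have hinv : (B - W)⁻¹ = B⁻¹ + (1 - c)⁻¹ • (B⁻¹ * W * B⁻¹) := by
    apply Matrix.inv_eq_right_inv
    have hWBW : W * B⁻¹ * W = c • W := by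
      rw [hW, vecMulVec_mul_mul_vecMulVec, hc]
    rw [Matrix.mul_add, Matrix.sub_mul, Matrix.sub_mul, hBB]
    rw [Matrix.mul_smul, Matrix.mul_smul, ← Matrix.mul_assoc, ← Matrix.mul_assoc, hBB,
      Matrix.one_mul]
    have hX : W * (B⁻¹ * W * B⁻¹) = c • (W * B⁻¹) := by
      rw [← Matrix.mul_assoc, ← Matrix.mul_assoc, hWBW, Matrix.smul_mul]
    rw [hX, smul_smul, ← sub_smul]
    have h4 : (1 - c)⁻¹ - (1 - c)⁻¹ * c = 1 := by
      field_simp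
    rw [h4, one_smul]
    abel
  -- trace identity
  set t : ℝ := Matrix.trace (M * B⁻¹ * W * B⁻¹) with ht
  have htrace : Matrix.trace (M * (B - W)⁻¹) = Matrix.trace (M * B⁻¹) + (1 - c)⁻¹ * t := by
    rw [hinv, Matrix.mul_add, Matrix.trace_add, Matrix.mul_smul, Matrix.trace_smul,
      smul_eq_mul, ht]
    simp only [Matrix.mul_assoc]
  -- t ≥ 0
  have ht0 : 0 ≤ t := by
    have heq : t = (B⁻¹ *ᵥ w) ⬝ᵥ M *ᵥ (B⁻¹ *ᵥ w) := by
      rw [ht, Matrix.trace_mul_comm, ← Matrix.mul_assoc, hW, trace_mul_vecMulVec,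
        ← Matrix.mulVec_mulVec, dotProduct_mulVec w B⁻¹, ← Matrix.mulVec_transpose, hBsymm,
        ← Matrix.mulVec_mulVec]
    rw [heq]
    simpa using hM.dotProduct_mulVec_nonneg (B⁻¹ *ᵥ w)
  rw [htrace]
  have : (1 - c)⁻¹ * t = t / (1 - c) := by ring
  rw [this]
  have h1γ : (0:ℝ) < 1 - γ := by linarith
  gcongr
end

section
/- Let A be symmetric with l·I ≺ A ≺ u·I (l < u), let w ∈ ℝ^d satisfy wwᵀ ⪯ γ(A − lI), and let l' = l + δ where 0 < δ ≤ (1/2)·λ_min(A − lI) and γ ≤ 1/4. Then wwᵀ ⪯ 2γ(A − l'·I). -/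
open Matrix

theorem stmt_9 {d : ℕ} (u l l' δ γ : ℝ) (A : Matrix (Fin d) (Fin d) ℝ)
    (hlu : l < u)
    (hl : (A - l • (1 : Matrix (Fin d) (Fin d) ℝ)).PosDef)
    (hu : (u • (1 : Matrix (Fin d) (Fin d) ℝ) - A).PosDef)
    (hH : (A - l • (1 : Matrix (Fin d) (Fin d) ℝ)).IsHermitian)
    (w : Fin d → ℝ)
    (hw : (γ • (A - l • (1 : Matrix (Fin d) (Fin d) ℝ)) -
      Matrix.vecMulVec w w).PosSemidef)
    (hl' : l' = l + δ) (hδ0 : 0 < δ)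
    (hδ : ∀ i, δ ≤ (1 / 2) * hH.eigenvalues i)
    (hγ : γ ≤ 1 / 4) :
    ((2 * γ) • (A - l' • (1 : Matrix (Fin d) (Fin d) ℝ)) -
      Matrix.vecMulVec w w).PosSemidef := by
  rcases Nat.eq_zero_or_pos d with hd | hd
  · subst hd
    refine Matrix.posSemidef_iff_dotProduct_mulVec.mpr ⟨?_, fun x => by simp [dotProduct]⟩
    ext i j
    exact i.elim0
  set B : Matrix (Fin d) (Fin d) ℝ := A - l • (1 : Matrix (Fin d) (Fin d) ℝ) with hB
  -- Key decomposition
  have hdecomp : (2 * γ) • (A - l' • (1 : Matrix (Fin d) (Fin d) ℝ)) -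
      Matrix.vecMulVec w w
      = (γ • B - Matrix.vecMulVec w w) + γ • (B - (2 * δ) • (1 : Matrix (Fin d) (Fin d) ℝ)) := by
    subst hl'
    rw [hB]
    ext i j
    simp [Matrix.sub_apply, Matrix.add_apply, Matrix.smul_apply, Matrix.one_apply]
    split_ifs <;> ring
  -- N := B - 2δ•1 is PSD
  have hN : (B - (2 * δ) • (1 : Matrix (Fin d) (Fin d) ℝ)).PosSemidef := by
    have hspec := hH.spectral_theorem
    set U : Matrix (Fin d) (Fin d) ℝ := (hH.eigenvectorUnitary : Matrix (Fin d) (Fin d) ℝ)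
    have hUU : U * star U = 1 := Matrix.mem_unitaryGroup_iff.mp hH.eigenvectorUnitary.2
    have hone : (2 * δ) • (1 : Matrix (Fin d) (Fin d) ℝ)
        = U * Matrix.diagonal (fun _ => (2 * δ : ℝ)) * star U := by
      have : Matrix.diagonal (fun _ : Fin d => (2 * δ : ℝ))
          = (2 * δ) • (1 : Matrix (Fin d) (Fin d) ℝ) := by
        ext i j; simp [Matrix.diagonal, Matrix.one_apply]
      rw [this, Matrix.mul_smul, Matrix.smul_mul, Matrix.mul_one, hUU]
    have heq : B - (2 * δ) • (1 : Matrix (Fin d) (Fin d) ℝ)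
        = U * Matrix.diagonal (fun i => hH.eigenvalues i - 2 * δ) * star U := by
      conv_lhs => rw [hspec, Unitary.conjStarAlgAut_apply, hone]
      rw [← Matrix.sub_mul, ← Matrix.mul_sub, Matrix.diagonal_sub]
      rfl
    rw [heq]
    have hdiag : (Matrix.diagonal (fun i => hH.eigenvalues i - 2 * δ)).PosSemidef := by
      refine Matrix.posSemidef_diagonal_iff.mpr fun i => ?_
      have := hδ i
      linarith
    exact hdiag.mul_mul_conjTranspose_same U
  -- γ ≥ 0
  have hγ0 : 0 ≤ γ := by
    obtain ⟨i⟩ : Nonempty (Fin d) := ⟨⟨0, hd⟩⟩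
    set x : Fin d → ℝ := Pi.single i 1 with hx
    have hx0 : x ≠ 0 := by
      intro h
      have := congrFun h i
      simp [hx] at this
    have h1 := hw.dotProduct_mulVec_nonneg x
    have h2 := hl.dotProduct_mulVec_pos hx0
    simp only [star_trivial] at h1 h2
    have hmv : (γ • B - Matrix.vecMulVec w w) *ᵥ x = γ • (B *ᵥ x) - (w ⬝ᵥ x) • w := by
      ext j
      simp [Matrix.sub_mulVec, Matrix.smul_mulVec, Matrix.vecMulVec, Matrix.mulVec,
        dotProduct, Finset.mul_sum]
      rw [Finset.sum_mul, ← Finset.sum_sub_distrib]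
      exact Finset.sum_congr rfl fun k _ => by ring
    rw [hmv] at h1
    rw [dotProduct_sub, dotProduct_smul, dotProduct_smul] at h1
    simp only [smul_eq_mul] at h1
    have hww : (0 : ℝ) ≤ (w ⬝ᵥ x) * (x ⬝ᵥ w) := by
      rw [dotProduct_comm]
      exact mul_self_nonneg _
    nlinarith [h1, h2, hww]
  rw [hdecomp]
  refine hw.add ?_
  refine Matrix.posSemidef_iff_dotProduct_mulVec.mpr ⟨?_, fun x => ?_⟩
  · have h1 : (B - (2 * δ) • (1 : Matrix (Fin d) (Fin d) ℝ)).IsHermitian := hN.1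
    unfold Matrix.IsHermitian at *
    rw [Matrix.conjTranspose_smul, h1, star_trivial]
  · rw [Matrix.smul_mulVec, dotProduct_smul]
    exact mul_nonneg hγ0 (by simpa using hN.dotProduct_mulVec_nonneg x)
end
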